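/- Let a = (a_n)_{n ≥ 0} be a sequence with values in a finite alphabet A. Suppose there exists a finite nonempty word w = w_0 w_1 ⋯ w_{m−1} over A such that the block frequency lim_{N → ∞} (1/N)·#{n < N : a_{n+i} = w_i for all 0 ≤ i < m} exists and is an irrational number. Then a is not q-automatic for any integer q ≥ 2. -/

import Mathlib

open Polynomial Filter

noncomputable def shiftEnd : Module.End ℚ (ℕ → ℚ) where
  toFun y := fun k => y (k+1)
  map_add' _ _ := rfl
  map_smul' _ _ := rfl

lemma shiftEnd_pow (i : ℕ) (y : ℕ → ℚ) (k : ℕ) : (shiftEnd ^ i) y k = y (k + i) := by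
  induction i generalizing y k with
  | zero => rfl
  | succ n ih =>
    rw [pow_succ]
    show (shiftEnd ^ n) (shiftEnd y) k = _
    rw [ih]
    show y (k + n + 1) = y (k + (n+1))
    rw [Nat.add_assoc]

lemma aeval_shiftEnd_apply (p : ℚ[X]) (y : ℕ → ℚ) (k : ℕ) :
    (aeval shiftEnd p) y k = ∑ i ∈ Finset.range (p.natDegree + 1), p.coeff i * y (k + i) := by
  rw [Polynomial.aeval_eq_sum_range]
  simp [LinearMap.sum_apply, LinearMap.smul_apply, shiftEnd_pow, Finset.sum_apply]

lemma tendsto_aeval_shiftEnd (p : ℚ[X]) (y : ℕ → ℚ) (ℓ : ℝ)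
    (hlim : Tendsto (fun n => (y n : ℝ)) atTop (nhds ℓ)) :
    Tendsto (fun k => ((aeval shiftEnd p) y k : ℝ)) atTop (nhds ((p.eval 1 : ℚ) * ℓ)) := by
  have h1 : (fun k => ((aeval shiftEnd p) y k : ℝ))
      = fun k => ∑ i ∈ Finset.range (p.natDegree + 1), (p.coeff i : ℝ) * (y (k + i) : ℝ) := by
    funext k; rw [aeval_shiftEnd_apply]; push_cast; ring
  have h2 : ((p.eval 1 : ℚ) : ℝ) = ∑ i ∈ Finset.range (p.natDegree + 1), (p.coeff i : ℝ) * 1 := by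
    rw [Polynomial.eval_eq_sum_range]; push_cast; simp [mul_one]
  have h2' : ((p.eval 1 : ℚ) : ℝ) * ℓ = ∑ i ∈ Finset.range (p.natDegree + 1), (p.coeff i : ℝ) * ℓ := by
    rw [h2, Finset.sum_mul]; simp only [mul_one]
  rw [h1, h2']
  apply tendsto_finset_sum
  intro i _
  exact (((tendsto_add_atTop_iff_nat i).mpr hlim).const_mul _)

lemma not_irrational_of_eval_one_ne (p : ℚ[X]) (y : ℕ → ℚ) (c : ℚ) (ℓ : ℝ)
    (h1 : p.eval 1 ≠ 0)
    (heq : (aeval shiftEnd p) y = fun _ => c)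
    (hlim : Tendsto (fun n => (y n : ℝ)) atTop (nhds ℓ)) : ¬ Irrational ℓ := by
  have ht := tendsto_aeval_shiftEnd p y ℓ hlim
  rw [heq] at ht
  have : ((p.eval 1 : ℚ) : ℝ) * ℓ = (c : ℝ) :=
    tendsto_nhds_unique ht tendsto_const_nhds
  have hℓ : ℓ = ((c / p.eval 1 : ℚ) : ℝ) := by
    push_cast
    field_simp
    linarith [this]
  rw [hℓ]
  exact Rat.not_irrational _

lemma limit_rational_of_rec : ∀ (d : ℕ) (p : ℚ[X]), p.natDegree ≤ d → p ≠ 0 →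
    ∀ (y : ℕ → ℚ) (c : ℚ) (ℓ : ℝ),
    ((aeval shiftEnd p) y = fun _ => c) →
    Tendsto (fun n => (y n : ℝ)) atTop (nhds ℓ) → ¬ Irrational ℓ := by
  intro d
  induction d with
  | zero =>
    intro p hdeg hp y c ℓ heq hlim
    obtain ⟨a, ha⟩ := Polynomial.natDegree_eq_zero.mp (Nat.le_zero.mp hdeg)
    have ha' : a ≠ 0 := by rintro rfl; simp at ha; exact hp ha.symm
    refine not_irrational_of_eval_one_ne p y c ℓ ?_ heq hlim
    rw [← ha]; simpa using ha'
  | succ d ih =>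
    intro p hdeg hp y c ℓ heq hlim
    by_cases h1 : p.eval 1 = 0
    · obtain ⟨p₂, hp₂⟩ : (X - C (1:ℚ)) ∣ p := dvd_iff_isRoot.mpr h1
      have hX : (X - C (1:ℚ)) ≠ 0 := X_sub_C_ne_zero 1
      have hp₂0 : p₂ ≠ 0 := by rintro rfl; rw [mul_zero] at hp₂; exact hp hp₂
      have hdeg2 : p₂.natDegree ≤ d := by
        have := Polynomial.natDegree_mul hX hp₂0
        rw [← hp₂, Polynomial.natDegree_X_sub_C] at this
        omega
      set g := (aeval shiftEnd p₂) y with hg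
      have hkey : ∀ k, g (k+1) - g k = c := by
        intro k
        have h3 : (aeval shiftEnd p) y = (aeval shiftEnd (X - C (1:ℚ))) g := by
          rw [hp₂, map_mul]; rfl
        have h2 : (aeval shiftEnd (X - C (1:ℚ))) g k = c := by
          rw [← h3, heq]
        rw [← h2]
        simp [map_sub, LinearMap.sub_apply]
        rfl
      have hglim : Tendsto (fun k => (g k : ℝ)) atTop (nhds ((p₂.eval 1 : ℚ) * ℓ)) :=
        tendsto_aeval_shiftEnd p₂ y ℓ hlim
      have hc0 : c = 0 := by
        have hs : Tendsto (fun k => ((g (k+1) : ℝ) - (g k : ℝ))) atTop (nhds 0) := by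
          have := (((tendsto_add_atTop_iff_nat 1).mpr hglim).sub hglim)
          simpa using this
        have h4 : (fun k => ((g (k+1) : ℝ) - (g k : ℝ))) = fun _ => (c:ℝ) := by
          funext k; rw [← Rat.cast_sub, hkey]
        rw [h4] at hs
        exact_mod_cast (tendsto_nhds_unique hs tendsto_const_nhds).symm
      have hgconst : ∀ k, g k = g 0 := by
        intro k
        induction k with
        | zero => rfl
        | succ n ihn => have := hkey n; rw [hc0] at this; linarith
      exact ih p₂ hdeg2 hp₂0 y (g 0) ℓ (funext hgconst) hlim
    · exact not_irrational_of_eval_one_ne p y c ℓ h1 heq hlim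

lemma sum_range_mul_eq {M : Type*} [AddCommMonoid M] (q N : ℕ) (f : ℕ → M) :
    ∑ n ∈ Finset.range (q*N), f n = ∑ r ∈ Finset.range q, ∑ n ∈ Finset.range N, f (q*n + r) := by
  induction N with
  | zero => simp
  | succ N ih =>
    have h1 : q * (N+1) = q*N + q := by ring
    rw [h1, Finset.sum_range_add, ih]
    simp only [Finset.sum_range_succ]
    rw [Finset.sum_add_distrib]

lemma count_mul (q N : ℕ) (P : ℕ → Prop) [DecidablePred P] :
    ((Finset.range (q*N)).filter P).card
      = ∑ r ∈ Finset.range q, ((Finset.range N).filter (fun n => P (q*n + r))).card := by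
  simp only [Finset.card_filter]
  exact sum_range_mul_eq q N _

/-- A sequence `a : ℕ → A` is `q`-automatic if its `q`-kernel, the set of
subsequences `n ↦ a (q^k * n + r)` with `k ≥ 0` and `0 ≤ r < q^k`, is finite. -/
def IsQAutomatic {A : Type*} (q : ℕ) (a : ℕ → A) : Prop :=
  {s : ℕ → A | ∃ k r : ℕ, r < q ^ k ∧ s = fun n => a (q ^ k * n + r)}.Finite

theorem not_automatic_of_irrational_block_frequency
    {A : Type*} [Fintype A] (a : ℕ → A)
    (m : ℕ) (hm : 0 < m) (w : Fin m → A) (ℓ : ℝ)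
    (hfreq : Filter.Tendsto
      (fun N : ℕ => (Set.ncard {n : ℕ | n < N ∧ ∀ i : Fin m, a (n + i) = w i} : ℝ) / N)
      Filter.atTop (nhds ℓ))
    (hirr : Irrational ℓ) :
    ∀ q : ℕ, 2 ≤ q → ¬ IsQAutomatic q a := by
  intro q hq hauto
  classical
  have hq0 : 0 < q := by omega
  have hK : {s : ℕ → A | ∃ k r : ℕ, r < q ^ k ∧ s = fun n => a (q ^ k * n + r)}.Finite := hauto
  -- extended kernel
  set K2 : Set (ℕ → A) :=
    (fun p : (ℕ → A) × ℕ => fun n => p.1 (n + p.2)) ''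
      ({s : ℕ → A | ∃ k r : ℕ, r < q ^ k ∧ s = fun n => a (q ^ k * n + r)} ×ˢ Set.Iic (2*m))
    with hK2def
  have hK2 : K2.Finite := (hK.prod (Set.finite_Iic _)).image _
  have hmemK2 : ∀ k r : ℕ, r < q ^ k + 2*m → (fun n => a (q ^ k * n + r)) ∈ K2 := by
    intro k r hr
    have hQ : 0 < q ^ k := Nat.pow_pos hq0
    have hmod : q^k * (r / q^k) + r % q^k = r := Nat.div_add_mod r (q^k)
    have hle : q^k * (r / q^k) ≤ r := Nat.le.intro hmod
    have ht : r / q^k ≤ 2*m := by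
      by_contra h
      push_neg at h
      have h2 : q^k * (2*m+1) ≤ q^k * (r / q^k) := Nat.mul_le_mul_left _ h
      nlinarith
    refine ⟨⟨fun n => a (q^k * n + r % q^k), r / q^k⟩,
      ⟨⟨k, r % q^k, Nat.mod_lt _ hQ, rfl⟩, ht⟩, ?_⟩
    funext n
    simp only
    congr 1
    rw [Nat.mul_add]
    omega
  -- the window sequences
  set S : Set (ℕ → Fin m → A) :=
    {s | ∃ k r : ℕ, r < q ^ k + m ∧ s = fun n (i : Fin m) => a (q ^ k * n + (r + (i:ℕ)))} with hSdef
  have hS : S.Finite := by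
    apply Set.Finite.subset
      ((Set.Finite.pi (fun _ : Fin m => hK2)).image (fun f : Fin m → (ℕ → A) => fun n i => f i n))
    rintro s ⟨k, r, hr, rfl⟩
    refine ⟨fun (i : Fin m) n => a (q^k * n + (r + (i:ℕ))), ?_, rfl⟩
    intro i _
    exact hmemK2 k (r + i) (by have := i.isLt; omega)
  -- closure of S under n ↦ q n + r
  have hclosure : ∀ s ∈ S, ∀ r < q, (fun n => s (q*n+r)) ∈ S := by
    rintro s ⟨k, r₀, hr₀, rfl⟩ r hr
    refine ⟨k+1, q^k * r + r₀, ?_, ?_⟩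
    · have h1 : q^k * (r+1) ≤ q^k * q := Nat.mul_le_mul_left _ hr
      have h2 : q^k * (r+1) = q^k * r + q^k := by ring
      have h3 : q^(k+1) = q^k * q := pow_succ q k
      omega
    · funext n i
      congr 1
      ring
  have hbS : (fun n (i : Fin m) => a (n + (i:ℕ))) ∈ S := by
    refine ⟨0, 0, by omega, ?_⟩
    funext n i
    congr 1
    simp
  -- finite index type
  set T : Finset (ℕ → Fin m → A) := hS.toFinset with hTdef
  set ι := {x // x ∈ T}
  have hbT : (fun n (i : Fin m) => a (n + (i:ℕ))) ∈ T := hS.mem_toFinset.mpr hbS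
  set β : ι := ⟨_, hbT⟩ with hβdef
  -- the transition map
  have hC : ∀ (s : ι) (r : Fin q), ∃ t : ι, (fun n => s.1 (q*n + r.1)) = t.1 := by
    intro s r
    have hs : s.1 ∈ S := hS.mem_toFinset.mp s.2
    have := hclosure s.1 hs r.1 r.isLt
    exact ⟨⟨_, hS.mem_toFinset.mpr this⟩, rfl⟩
  choose σ hσ using hC
  -- counting
  set cnt : (ℕ → Fin m → A) → ℕ → ℕ :=
    fun s N => ((Finset.range N).filter (fun n => s n = w)).card with hcntdef
  set F : ℕ → ι → ℚ := fun N t => (cnt t.1 N : ℚ) with hFdef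
  set M : Matrix ι ι ℚ :=
    fun s t => ((Finset.univ.filter (fun r : Fin q => σ s r = t)).card : ℚ) with hMdef
  have Frec : ∀ N, M.mulVec (F N) = F (q*N) := by
    intro N
    funext s
    have h1 : cnt s.1 (q*N) = ∑ r ∈ Finset.range q, cnt (fun n => s.1 (q*n + r)) N :=
      count_mul q N _
    have h2 : F (q*N) s = ∑ r : Fin q, F N (σ s r) := by
      show (cnt s.1 (q*N) : ℚ) = _
      rw [h1]
      push_cast
      rw [← Fin.sum_univ_eq_sum_range (fun r => (cnt (fun n => s.1 (q*n + r)) N : ℚ)) q]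
      refine Finset.sum_congr rfl fun r _ => ?_
      rw [hσ s r]
    rw [h2]
    show Finset.univ.sum (fun t => M s t * F N t) = _
    rw [← Finset.sum_fiberwise Finset.univ (fun r => σ s r) (fun r => F N (σ s r))]
    refine Finset.sum_congr rfl fun t _ => ?_
    have : ∀ r ∈ Finset.univ.filter (fun r : Fin q => σ s r = t), F N (σ s r) = F N t := by
      intro r hr
      rw [(Finset.mem_filter.mp hr).2]
    rw [Finset.sum_congr rfl this, Finset.sum_const]
    simp [hMdef, nsmul_eq_mul]
  -- the rescaled matrix and vector
  set N' : Matrix ι ι ℚ := ((q:ℚ)⁻¹) • M with hN'def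
  have hqQ : (q:ℚ) ≠ 0 := by positivity
  have hF1 : ∀ j, (N'^j).mulVec (F 1) = ((q:ℚ)⁻¹)^j • F (q^j) := by
    intro j
    induction j with
    | zero => simp [Matrix.one_mulVec]
    | succ j ih =>
      rw [pow_succ', ← Matrix.mulVec_mulVec, ih, Matrix.mulVec_smul, hN'def,
        Matrix.smul_mulVec, Frec, ← pow_succ' q j]
      rw [smul_smul, ← pow_succ]
  set y : ℕ → ℚ := fun j => ((N'^j).mulVec (F 1)) β with hydef
  -- Cayley-Hamilton recurrence
  set p' : ℚ[X] := N'.charpoly with hp'def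
  have hp'0 : p' ≠ 0 := (Matrix.charpoly_monic N').ne_zero
  have hsum : ∑ i ∈ Finset.range (p'.natDegree+1), p'.coeff i • N'^i = 0 := by
    rw [← Polynomial.aeval_eq_sum_range]
    exact Matrix.aeval_self_charpoly N'
  have hk : ∀ k, ∑ i ∈ Finset.range (p'.natDegree+1), p'.coeff i • N'^(k+i) = 0 := by
    intro k
    have : ∑ i ∈ Finset.range (p'.natDegree+1), p'.coeff i • N'^(k+i)
        = N'^k * ∑ i ∈ Finset.range (p'.natDegree+1), p'.coeff i • N'^i := by
      rw [Finset.mul_sum]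
      refine Finset.sum_congr rfl fun i _ => ?_
      rw [mul_smul_comm, pow_add]
    rw [this, hsum, mul_zero]
  set φ : Matrix ι ι ℚ →ₗ[ℚ] ℚ :=
    { toFun := fun A => A.mulVec (F 1) β,
      map_add' := by intros; simp [Matrix.add_mulVec, Pi.add_apply],
      map_smul' := by intros; simp [Matrix.smul_mulVec] } with hφdef
  have heqn : ∀ k, ∑ i ∈ Finset.range (p'.natDegree+1), p'.coeff i * y (k+i) = 0 := by
    intro k
    have h0 : φ (∑ i ∈ Finset.range (p'.natDegree+1), p'.coeff i • N'^(k+i)) = 0 := by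
      rw [hk k]; exact map_zero φ
    rw [map_sum] at h0
    rw [← h0]
    refine Finset.sum_congr rfl fun i _ => ?_
    rw [map_smul, smul_eq_mul]
    rfl
  have haeval : (aeval shiftEnd p') y = fun _ => (0:ℚ) := by
    funext k
    rw [aeval_shiftEnd_apply]
    exact heqn k
  -- limit of y
  have hset : ∀ N : ℕ, {n : ℕ | n < N ∧ ∀ i : Fin m, a (n + i) = w i}
      = ↑((Finset.range N).filter (fun n => (fun i : Fin m => a (n + i)) = w)) := by
    intro N
    ext n
    simp [Finset.mem_filter, Finset.mem_range, funext_iff, and_comm]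
  have hylim : Tendsto (fun j => ((y j : ℚ) : ℝ)) atTop (nhds ℓ) := by
    have hqt : Tendsto (fun j : ℕ => q^j) atTop atTop :=
      tendsto_pow_atTop_atTop_of_one_lt (by omega)
    have htl := hfreq.comp hqt
    have : (fun j => ((y j : ℚ) : ℝ))
        = fun j : ℕ => (Set.ncard {n : ℕ | n < q^j ∧ ∀ i : Fin m, a (n + i) = w i} : ℝ) / (q^j : ℕ) := by
      funext j
      have h5 : y j = ((q:ℚ)⁻¹)^j * (cnt (β.1) (q^j)) := by
        rw [hydef]
        simp only
        rw [hF1 j, Pi.smul_apply, smul_eq_mul]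
      have h6 : Set.ncard {n : ℕ | n < q^j ∧ ∀ i : Fin m, a (n + i) = w i} = cnt (β.1) (q^j) := by
        rw [hset (q^j)]
        rw [Set.ncard_coe_finset]
      rw [h5, h6]
      push_cast
      rw [inv_pow]
      field_simp
    rw [this]
    exact htl
  exact limit_rational_of_rec p'.natDegree p' le_rfl hp'0 y 0 ℓ haeval hylim hirr
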